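/- Let A, B be join-semilattices with zero. Then the direct product distributes over tensor product: (A × B) ⊗ C ≅ (A ⊗ C) × (B ⊗ C), for any join-semilattice C with zero, via the map sending ⟨a,b⟩ ⊗ c to ⟨a ⊗ c, b ⊗ c⟩. -/

import Mathlib

/-- `⊥_{A,B} = (A × {0}) ∪ ({0} × B)`. -/
def tensorBotSet {α β : Type*} [SemilatticeSup α] [OrderBot α] [SemilatticeSup β] [OrderBot β] :
    Set (α × β) :=
  {p | p.1 = ⊥ ∨ p.2 = ⊥}

/-- A bi-ideal of `A × B`: a downward-closed subset containing `⊥_{A,B}` and closed under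
lateral joins. -/
def IsBiIdeal {α β : Type*} [SemilatticeSup α] [OrderBot α] [SemilatticeSup β] [OrderBot β]
    (I : Set (α × β)) : Prop :=
  (∀ p ∈ I, ∀ q : α × β, q ≤ p → q ∈ I) ∧
    tensorBotSet ⊆ I ∧
    (∀ p ∈ I, ∀ q ∈ I, (p : α × β).1 = (q : α × β).1 → (p.1, p.2 ⊔ q.2) ∈ I) ∧
    (∀ p ∈ I, ∀ q ∈ I, (p : α × β).2 = (q : α × β).2 → (p.1 ⊔ q.1, p.2) ∈ I)

/-- The bi-ideal generated by a subset `X` of `A × B`. -/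
def biIdealGen {α β : Type*} [SemilatticeSup α] [OrderBot α] [SemilatticeSup β] [OrderBot β]
    (X : Set (α × β)) : Set (α × β) :=
  ⋂₀ {I | IsBiIdeal I ∧ X ⊆ I}

/-- The elements of the tensor product `A ⊗ B`: the compact (finitely generated) bi-ideals
of `A × B`. -/
def IsTensorElt {α β : Type*} [SemilatticeSup α] [OrderBot α] [SemilatticeSup β] [OrderBot β]
    (I : Set (α × β)) : Prop :=
  ∃ X : Finset (α × β), I = biIdealGen ↑X

section Aux
variable {α β : Type*} [SemilatticeSup α] [OrderBot α] [SemilatticeSup β] [OrderBot β]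

theorem isBiIdeal_biIdealGen (X : Set (α × β)) : IsBiIdeal (biIdealGen X) := by
  refine ⟨?_, ?_, ?_, ?_⟩
  · intro p hp q hq I hI
    exact hI.1.1 p (hp I hI) q hq
  · intro x hx I hI
    exact hI.1.2.1 hx
  · intro p hp q hq h I hI
    exact hI.1.2.2.1 p (hp I hI) q (hq I hI) h
  · intro p hp q hq h I hI
    exact hI.1.2.2.2 p (hp I hI) q (hq I hI) h

theorem subset_biIdealGen (X : Set (α × β)) : X ⊆ biIdealGen X :=
  fun _ hx _ hI => hI.2 hx

theorem biIdealGen_le {X I : Set (α × β)} (hI : IsBiIdeal I) (hX : X ⊆ I) :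
    biIdealGen X ⊆ I := fun _ hx => hx I ⟨hI, hX⟩

theorem biIdealGen_mono {X Y : Set (α × β)} (h : X ⊆ Y) :
    biIdealGen X ⊆ biIdealGen Y :=
  biIdealGen_le (isBiIdeal_biIdealGen Y) (h.trans (subset_biIdealGen Y))

theorem biIdealGen_union_of_subset {X S : Set (α × β)} (h : S ⊆ biIdealGen X) :
    biIdealGen (X ∪ S) = biIdealGen X := by
  apply subset_antisymm
  · exact biIdealGen_le (isBiIdeal_biIdealGen X)
      (Set.union_subset (subset_biIdealGen X) h)
  · exact biIdealGen_mono Set.subset_union_left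

theorem botSet_subset_biIdealGen (X : Set (α × β)) : tensorBotSet ⊆ biIdealGen X :=
  (isBiIdeal_biIdealGen X).2.1

end Aux

section Main
variable {α β γ : Type*} [SemilatticeSup α] [OrderBot α] [SemilatticeSup β]
  [OrderBot β] [SemilatticeSup γ] [OrderBot γ]

/-- first projection map on points -/
def pm1 (p : (α × β) × γ) : α × γ := (p.1.1, p.2)
def pm2 (p : (α × β) × γ) : β × γ := (p.1.2, p.2)

def phi (J : Set (α × γ)) (K : Set (β × γ)) : Set ((α × β) × γ) :=
  {p | (p.1.1, p.2) ∈ J ∧ (p.1.2, p.2) ∈ K}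

def proj1 (I : Set ((α × β) × γ)) : Set (α × γ) := {q | ((q.1, ⊥), q.2) ∈ I}
def proj2 (I : Set ((α × β) × γ)) : Set (β × γ) := {q | ((⊥, q.1), q.2) ∈ I}

theorem phi_mono {J J' : Set (α × γ)} {K K' : Set (β × γ)} (hJ : J ⊆ J') (hK : K ⊆ K') :
    phi J K ⊆ phi J' K' := fun _ hp => ⟨hJ hp.1, hK hp.2⟩

theorem proj1_mono {I I' : Set ((α × β) × γ)} (h : I ⊆ I') : proj1 I ⊆ proj1 I' :=
  fun _ hq => h hq

theorem proj2_mono {I I' : Set ((α × β) × γ)} (h : I ⊆ I') : proj2 I ⊆ proj2 I' :=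
  fun _ hq => h hq

theorem isBiIdeal_phi {J : Set (α × γ)} {K : Set (β × γ)}
    (hJ : IsBiIdeal J) (hK : IsBiIdeal K) : IsBiIdeal (phi J K) := by
  refine ⟨?_, ?_, ?_, ?_⟩
  · rintro ⟨⟨a, b⟩, c⟩ ⟨h1, h2⟩ ⟨⟨a', b'⟩, c'⟩ ⟨⟨ha, hb⟩, hc⟩
    exact ⟨hJ.1 _ h1 _ ⟨ha, hc⟩, hK.1 _ h2 _ ⟨hb, hc⟩⟩
  · rintro ⟨⟨a, b⟩, c⟩ (h | h)
    · rw [Prod.ext_iff] at h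
      exact ⟨hJ.2.1 (Or.inl h.1), hK.2.1 (Or.inl h.2)⟩
    · exact ⟨hJ.2.1 (Or.inr h), hK.2.1 (Or.inr h)⟩
  · rintro ⟨⟨a, b⟩, c⟩ ⟨h1, h2⟩ ⟨⟨a', b'⟩, c'⟩ ⟨h1', h2'⟩ h
    rw [Prod.ext_iff] at h
    obtain ⟨ha, hb⟩ := h
    dsimp at ha hb ⊢
    subst ha; subst hb
    exact ⟨hJ.2.2.1 _ h1 _ h1' rfl, hK.2.2.1 _ h2 _ h2' rfl⟩
  · rintro ⟨⟨a, b⟩, c⟩ ⟨h1, h2⟩ ⟨⟨a', b'⟩, c'⟩ ⟨h1', h2'⟩ h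
    dsimp at h ⊢
    subst h
    exact ⟨hJ.2.2.2 _ h1 _ h1' rfl, hK.2.2.2 _ h2 _ h2' rfl⟩

theorem isBiIdeal_proj1 {I : Set ((α × β) × γ)} (hI : IsBiIdeal I) :
    IsBiIdeal (proj1 I) := by
  refine ⟨?_, ?_, ?_, ?_⟩
  · rintro ⟨a, c⟩ h ⟨a', c'⟩ ⟨ha, hc⟩
    exact hI.1 _ h _ ⟨⟨ha, le_refl ⊥⟩, hc⟩
  · rintro ⟨a, c⟩ (h | h)
    · dsimp at h; subst h
      exact hI.2.1 (Or.inl (Prod.ext rfl rfl))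
    · dsimp at h; subst h
      exact hI.2.1 (Or.inr rfl)
  · rintro ⟨a, c⟩ h ⟨a', c'⟩ h' hh
    dsimp at hh; subst hh
    have := hI.2.2.1 _ h _ h' rfl
    exact this
  · rintro ⟨a, c⟩ h ⟨a', c'⟩ h' hh
    dsimp at hh; subst hh
    have := hI.2.2.2 _ h _ h' rfl
    simpa [proj1] using this

theorem isBiIdeal_proj2 {I : Set ((α × β) × γ)} (hI : IsBiIdeal I) :
    IsBiIdeal (proj2 I) := by
  refine ⟨?_, ?_, ?_, ?_⟩
  · rintro ⟨b, c⟩ h ⟨b', c'⟩ ⟨hb, hc⟩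
    exact hI.1 _ h _ ⟨⟨le_refl ⊥, hb⟩, hc⟩
  · rintro ⟨b, c⟩ (h | h)
    · dsimp at h; subst h
      exact hI.2.1 (Or.inl (Prod.ext rfl rfl))
    · dsimp at h; subst h
      exact hI.2.1 (Or.inr rfl)
  · rintro ⟨b, c⟩ h ⟨b', c'⟩ h' hh
    dsimp at hh; subst hh
    exact hI.2.2.1 _ h _ h' rfl
  · rintro ⟨b, c⟩ h ⟨b', c'⟩ h' hh
    dsimp at hh; subst hh
    have := hI.2.2.2 _ h _ h' rfl
    simpa [proj2] using this

theorem phi_proj {I : Set ((α × β) × γ)} (hI : IsBiIdeal I) :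
    phi (proj1 I) (proj2 I) = I := by
  ext ⟨⟨a, b⟩, c⟩
  constructor
  · rintro ⟨h1, h2⟩
    have := hI.2.2.2 _ h1 _ h2 rfl
    simpa using this
  · intro h
    exact ⟨hI.1 _ h _ ⟨⟨le_refl a, bot_le⟩, le_refl c⟩,
           hI.1 _ h _ ⟨⟨bot_le, le_refl b⟩, le_refl c⟩⟩

theorem proj1_phi {J : Set (α × γ)} {K : Set (β × γ)} (hK : IsBiIdeal K) :
    proj1 (phi J K) = J := by
  ext ⟨a, c⟩
  exact ⟨fun h => h.1, fun h => ⟨h, hK.2.1 (Or.inl rfl)⟩⟩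

theorem proj2_phi {J : Set (α × γ)} {K : Set (β × γ)} (hJ : IsBiIdeal J) :
    proj2 (phi J K) = K := by
  ext ⟨b, c⟩
  exact ⟨fun h => h.2, fun h => ⟨hJ.2.1 (Or.inl rfl), h⟩⟩

theorem gen_eq_phi (X : Set ((α × β) × γ)) :
    biIdealGen X = phi (biIdealGen (pm1 '' X)) (biIdealGen (pm2 '' X)) := by
  apply subset_antisymm
  · apply biIdealGen_le
      (isBiIdeal_phi (isBiIdeal_biIdealGen _) (isBiIdeal_biIdealGen _))
    intro p hp
    exact ⟨subset_biIdealGen _ ⟨p, hp, rfl⟩, subset_biIdealGen _ ⟨p, hp, rfl⟩⟩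
  · have h1 : biIdealGen (pm1 '' X) ⊆ proj1 (biIdealGen X) := by
      apply biIdealGen_le (isBiIdeal_proj1 (isBiIdeal_biIdealGen X))
      rintro _ ⟨p, hp, rfl⟩
      exact (isBiIdeal_biIdealGen X).1 _ (subset_biIdealGen X hp) _
        ⟨⟨le_refl _, bot_le⟩, le_refl _⟩
    have h2 : biIdealGen (pm2 '' X) ⊆ proj2 (biIdealGen X) := by
      apply biIdealGen_le (isBiIdeal_proj2 (isBiIdeal_biIdealGen X))
      rintro _ ⟨p, hp, rfl⟩
      exact (isBiIdeal_biIdealGen X).1 _ (subset_biIdealGen X hp) _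
        ⟨⟨bot_le, le_refl _⟩, le_refl _⟩
    calc phi (biIdealGen (pm1 '' X)) (biIdealGen (pm2 '' X))
        ⊆ phi (proj1 (biIdealGen X)) (proj2 (biIdealGen X)) := phi_mono h1 h2
      _ = biIdealGen X := phi_proj (isBiIdeal_biIdealGen X)

theorem proj1_gen (X : Set ((α × β) × γ)) :
    proj1 (biIdealGen X) = biIdealGen (pm1 '' X) := by
  rw [gen_eq_phi, proj1_phi (isBiIdeal_biIdealGen _)]

theorem proj2_gen (X : Set ((α × β) × γ)) :
    proj2 (biIdealGen X) = biIdealGen (pm2 '' X) := by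
  rw [gen_eq_phi, proj2_phi (isBiIdeal_biIdealGen _)]

/-- embedding maps -/
def em1 (q : α × γ) : (α × β) × γ := ((q.1, ⊥), q.2)
def em2 (q : β × γ) : (α × β) × γ := ((⊥, q.1), q.2)

theorem phi_gen_eq_gen (Y : Set (α × γ)) (Z : Set (β × γ)) :
    phi (biIdealGen Y) (biIdealGen Z) = biIdealGen (em1 '' Y ∪ em2 '' Z) := by
  rw [gen_eq_phi]
  have h1 : pm1 '' (em1 '' Y ∪ em2 '' Z) = Y ∪ ((fun q : β × γ => ((⊥ : α), q.2)) '' Z) := by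
    ext q
    simp only [Set.image_union, ← Set.image_comp, Set.mem_union, Set.mem_image,
      Function.comp, pm1, em1, em2]
    constructor
    · rintro (⟨y, hy, rfl⟩ | ⟨z, hz, rfl⟩)
      · exact Or.inl hy
      · exact Or.inr ⟨z, hz, rfl⟩
    · rintro (hq | ⟨z, hz, rfl⟩)
      · exact Or.inl ⟨q, hq, rfl⟩
      · exact Or.inr ⟨z, hz, rfl⟩
  have h2 : pm2 '' (em1 '' Y ∪ em2 '' Z) = ((fun q : α × γ => ((⊥ : β), q.2)) '' Y) ∪ Z := by
    ext q
    simp only [Set.image_union, ← Set.image_comp, Set.mem_union, Set.mem_image,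
      Function.comp, pm2, em1, em2]
    constructor
    · rintro (⟨y, hy, rfl⟩ | ⟨z, hz, rfl⟩)
      · exact Or.inl ⟨y, hy, rfl⟩
      · exact Or.inr hz
    · rintro (⟨y, hy, rfl⟩ | hq)
      · exact Or.inl ⟨y, hy, rfl⟩
      · exact Or.inr ⟨q, hq, rfl⟩
  have e1 : biIdealGen (Y ∪ ((fun q : β × γ => ((⊥ : α), q.2)) '' Z)) = biIdealGen Y := by
    apply biIdealGen_union_of_subset
    rintro q ⟨z, _, rfl⟩
    exact botSet_subset_biIdealGen Y (Or.inl rfl)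
  have e2 : biIdealGen (((fun q : α × γ => ((⊥ : β), q.2)) '' Y) ∪ Z) = biIdealGen Z := by
    rw [Set.union_comm]
    apply biIdealGen_union_of_subset
    rintro q ⟨y, _, rfl⟩
    exact botSet_subset_biIdealGen Z (Or.inl rfl)
  rw [h1, h2, e1, e2]

theorem tensor_proj1 {I : Set ((α × β) × γ)} (h : IsTensorElt I) :
    IsTensorElt (proj1 I) := by
  classical
  obtain ⟨X, rfl⟩ := h
  exact ⟨X.image pm1, by rw [proj1_gen, Finset.coe_image]⟩

theorem tensor_proj2 {I : Set ((α × β) × γ)} (h : IsTensorElt I) :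
    IsTensorElt (proj2 I) := by
  classical
  obtain ⟨X, rfl⟩ := h
  exact ⟨X.image pm2, by rw [proj2_gen, Finset.coe_image]⟩

theorem tensor_phi {J : Set (α × γ)} {K : Set (β × γ)}
    (hJ : IsTensorElt J) (hK : IsTensorElt K) : IsTensorElt (phi J K) := by
  classical
  obtain ⟨Y, rfl⟩ := hJ
  obtain ⟨Z, rfl⟩ := hK
  exact ⟨Y.image em1 ∪ Z.image em2, by
    rw [phi_gen_eq_gen, Finset.coe_union, Finset.coe_image, Finset.coe_image]⟩

theorem IsTensorElt.isBiIdeal {δ ε : Type*} [SemilatticeSup δ] [OrderBot δ]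
    [SemilatticeSup ε] [OrderBot ε] {I : Set (δ × ε)} (h : IsTensorElt I) :
    IsBiIdeal I := by
  obtain ⟨X, rfl⟩ := h
  exact isBiIdeal_biIdealGen _

end Main

/-- Direct product distributes over tensor product:
`(A × B) ⊗ C ≅ (A ⊗ C) × (B ⊗ C)` via `⟨a,b⟩ ⊗ c ↦ ⟨a ⊗ c, b ⊗ c⟩`. -/
theorem stmt18 {α β γ : Type*} [SemilatticeSup α] [OrderBot α] [SemilatticeSup β]
    [OrderBot β] [SemilatticeSup γ] [OrderBot γ] :
    ∃ e : {I : Set ((α × β) × γ) // IsTensorElt I} ≃o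
        {I : Set (α × γ) // IsTensorElt I} × {I : Set (β × γ) // IsTensorElt I},
      ∀ (a : α) (b : β) (c : γ),
        e ⟨biIdealGen {((a, b), c)}, {((a, b), c)}, by simp⟩ =
          (⟨biIdealGen {(a, c)}, {(a, c)}, by simp⟩,
           ⟨biIdealGen {(b, c)}, {(b, c)}, by simp⟩) := by
  refine ⟨⟨⟨fun I => (⟨proj1 I.1, tensor_proj1 I.2⟩, ⟨proj2 I.1, tensor_proj2 I.2⟩),
    fun JK => ⟨phi JK.1.1 JK.2.1, tensor_phi JK.1.2 JK.2.2⟩,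
    fun I => Subtype.ext (phi_proj I.2.isBiIdeal),
    fun JK => Prod.ext (Subtype.ext (proj1_phi JK.2.2.isBiIdeal))
      (Subtype.ext (proj2_phi JK.1.2.isBiIdeal))⟩, ?_⟩, ?_⟩
  · intro I I'
    constructor
    · rintro ⟨h1, h2⟩
      calc I.1 = phi (proj1 I.1) (proj2 I.1) := (phi_proj I.2.isBiIdeal).symm
        _ ⊆ phi (proj1 I'.1) (proj2 I'.1) := phi_mono h1 h2
        _ = I'.1 := phi_proj I'.2.isBiIdeal
    · intro h
      exact ⟨proj1_mono h, proj2_mono h⟩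
  · intro a b c
    refine Prod.ext (Subtype.ext ?_) (Subtype.ext ?_)
    · show proj1 (biIdealGen {((a, b), c)}) = biIdealGen {(a, c)}
      rw [proj1_gen, Set.image_singleton]
      rfl
    · show proj2 (biIdealGen {((a, b), c)}) = biIdealGen {(b, c)}
      rw [proj2_gen, Set.image_singleton]
      rfl
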